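/- Suppose α₁ is irrational, θ = (p₁/q₁)·α₁ + p₂/q₂ for integers p₁, p₂ and positive integers q₁, q₂, and 1, α₁, θ·α₂ are linearly independent over ℚ. Then for every s ∈ ℝ and every w ∈ ℝ/ℤ, the point (−(p₁/q₁)·s, s mod 1, w) lies in the closure of S. -/

import Mathlib

/-- The set `S = { (m − k·θ, k·α₁ mod 1, m·α₂ mod 1) : k, m ∈ ℕ }` in
`ℝ × (ℝ/ℤ) × (ℝ/ℤ)`. -/
def Sset (θ α₁ α₂ : ℝ) : Set (ℝ × AddCircle (1 : ℝ) × AddCircle (1 : ℝ)) :=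
  {x | ∃ k m : ℕ, x = ((m : ℝ) - (k : ℝ) * θ,
    (((k : ℝ) * α₁ : ℝ) : AddCircle (1 : ℝ)),
    (((m : ℝ) * α₂ : ℝ) : AddCircle (1 : ℝ)))}

/-!
Put `x₁ = q₂ α₁` and `x₂ = q₁ q₂ θ α₂`; then `1, x₁, x₂` are independent over `ℚ`, so by
Kronecker's theorem `(n x₁, n x₂) mod ℤ²` approaches any point of the torus along a sequence
`n → ∞`. With `k = q₁ q₂ n`, `m = q₁ p₂ n + p₁ ℓ` and `u = n x₁ - ℓ` for integers `ℓ`, the relation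
`θ = (p₁/q₁) α₁ + p₂/q₂` gives `m - k θ = -p₁ u`, `k α₁ ≡ q₁ u` and `m α₂ ≡ n x₂ - p₁ α₂ u`, so
aiming `(n x₁, n x₂)` at `(s/q₁, w + p₁ α₂ s/q₁)` makes these points of `S` converge to
`(-(p₁/q₁) s, s, w)`; `m ≥ 0` eventually because `θ > 0`.

Kronecker's theorem is proved in `ℝ²`: the closure `H` of `ℤ (x₁, x₂) + ℤ²` contains arbitrarily
short nonzero vectors (the fractional parts of `n (x₁, x₂)` accumulate), hence a line `ℝ u`. The
image of `H` under a functional with kernel `ℝ u` is a subgroup of `ℝ`; if it is dense then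
`H = ℝ²`, and if it is cyclic the images of `(1, 0)`, `(0, 1)`, `(x₁, x₂)` give an integer relation
between `1, x₁, x₂`.
-/

open Filter Set Topology

local notation "𝕋" => AddCircle (1 : ℝ)

theorem LinearIndependent.eq_zero_of_intCast_add_mul_add_mul {x y : ℝ}
    (h : LinearIndependent ℚ ![1, x, y]) {a b c : ℤ} (habc : (a : ℝ) + b * x + c * y = 0) :
    a = 0 ∧ b = 0 ∧ c = 0 := by
  have := Fintype.linearIndependent_iff.1 h ![a, b, c] (by
    simpa [Fin.sum_univ_three, Rat.smul_def] using habc)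
  simpa using And.intro (this 0) (And.intro (this 1) (this 2))

theorem LinearIndependent.one_mul_mul {x y : ℝ} (h : LinearIndependent ℚ ![1, x, y]) {a b : ℚ}
    (ha : a ≠ 0) (hb : b ≠ 0) : LinearIndependent ℚ ![1, a * x, b * y] := by
  convert h.units_smul ![1, Units.mk0 a ha, Units.mk0 b hb] using 1
  ext i
  fin_cases i <;> simp [Units.smul_def, Rat.smul_def]

theorem AddCircle.coe_add_intCast (x : ℝ) (z : ℤ) : ((x + z : ℝ) : 𝕋) = x := by
  rw [AddCircle.coe_add, ← zsmul_one, AddCircle.coe_zsmul, AddCircle.coe_period, smul_zero,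
    add_zero]

theorem AddCircle.exists_tendsto_sub_intCast {ι : Type*} {l : Filter ι} {a : ι → ℝ} {b : ℝ}
    (h : Tendsto (fun i ↦ (a i : 𝕋)) l (𝓝 (b : 𝕋))) :
    ∃ ℓ : ι → ℤ, Tendsto (fun i ↦ a i - ℓ i) l (𝓝 b) := by
  refine ⟨fun i ↦ round (a i - b), tendsto_iff_norm_sub_tendsto_zero.2 ?_⟩
  convert tendsto_iff_norm_sub_tendsto_zero.1 h using 2 with i
  rw [← AddCircle.coe_sub, AddCircle.norm_eq, Real.norm_eq_abs]
  simp only [inv_one, one_mul, mul_one]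
  ring_nf

section ProperSpace

variable {E : Type*} [NormedAddCommGroup E]

theorem AddSubgroup.exists_ne_zero_norm_lt_of_injective (H : AddSubgroup E)
    {K : Set E} (hK : IsCompact K) {p : ℕ → E} (hp : Function.Injective p)
    (hpK : ∀ n, p n ∈ K) (hpH : ∀ n, p n ∈ H) {ε : ℝ} (hε : 0 < ε) :
    ∃ v ∈ H, v ≠ 0 ∧ ‖v‖ < ε := by
  obtain ⟨a, -, φ, hφ, hlim⟩ := hK.tendsto_subseq hpK
  obtain ⟨N, hN⟩ := Metric.tendsto_atTop.1 hlim (ε / 2) (half_pos hε)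
  refine ⟨p (φ (N + 1)) - p (φ N), H.sub_mem (hpH _) (hpH _),
    sub_ne_zero.2 (hp.ne (hφ.injective.ne N.succ_ne_self)), ?_⟩
  rw [← dist_eq_norm]
  calc dist (p (φ (N + 1))) (p (φ N)) ≤ dist (p (φ (N + 1))) a + dist (p (φ N)) a :=
        dist_triangle_right _ _ _
    _ < ε / 2 + ε / 2 := add_lt_add (hN _ N.le_succ) (hN _ le_rfl)
    _ = ε := add_halves ε

variable [NormedSpace ℝ E] [ProperSpace E]

/-- Normalising ever shorter vectors `v` of `H` and taking a limit direction `u`,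
the multiples `⌊t / ‖v‖⌋ • v ∈ H` converge to `t • u`. -/
theorem AddSubgroup.exists_ne_zero_forall_smul_mem (H : AddSubgroup E) (hH : IsClosed (H : Set E))
    (h : ∀ ε > 0, ∃ v ∈ H, v ≠ 0 ∧ ‖v‖ < ε) :
    ∃ u : E, u ≠ 0 ∧ ∀ t : ℝ, t • u ∈ H := by
  choose v hvH hv0 hvε using fun n : ℕ ↦ h (1 / (n + 1)) Nat.one_div_pos_of_nat
  have hv_lim : Tendsto (fun n ↦ ‖v n‖) atTop (𝓝 0) := squeeze_zero (fun n ↦ norm_nonneg _)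
    (fun n ↦ (hvε n).le) tendsto_one_div_add_atTop_nhds_zero_nat
  obtain ⟨u, hu, φ, hφ, hlim⟩ := (isCompact_sphere (0 : E) 1).tendsto_subseq
    (x := fun n ↦ ‖v n‖⁻¹ • v n) fun n ↦ by simp [norm_smul, hv0 n]
  refine ⟨u, ne_zero_of_mem_unit_sphere ⟨u, hu⟩, fun t ↦ ?_⟩
  let w : ℕ → E := fun n ↦ ⌊t / ‖v (φ n)‖⌋ • v (φ n)
  have hw : ∀ n, w n = t • (‖v (φ n)‖⁻¹ • v (φ n)) - Int.fract (t / ‖v (φ n)‖) • v (φ n) := by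
    intro n
    simp only [w, smul_smul, ← Int.cast_smul_eq_zsmul ℝ, Int.fract, sub_smul, ← div_eq_mul_inv]
    abel
  have hfract : Tendsto (fun n ↦ Int.fract (t / ‖v (φ n)‖) • v (φ n)) atTop (𝓝 0) := by
    refine squeeze_zero_norm (fun n ↦ ?_) (hv_lim.comp hφ.tendsto_atTop)
    rw [norm_smul, Real.norm_of_nonneg (Int.fract_nonneg _)]
    exact mul_le_of_le_one_left (norm_nonneg _) (Int.fract_lt_one _).le
  have hw_lim : Tendsto w atTop (𝓝 (t • u)) := by
    rw [funext hw, ← sub_zero (t • u)]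
    exact (hlim.const_smul t).sub hfract
  exact hH.mem_of_tendsto hw_lim (Eventually.of_forall fun n ↦ H.zsmul_mem (hvH _) _)

end ProperSpace

section Plane

variable (u : ℝ × ℝ)

def crossWith : ℝ × ℝ →+ ℝ :=
  AddMonoidHom.mk' (fun z ↦ u.2 * z.1 - u.1 * z.2) fun _ _ ↦ by
    simp only [Prod.fst_add, Prod.snd_add]; ring

theorem crossWith_apply (z : ℝ × ℝ) : crossWith u z = u.2 * z.1 - u.1 * z.2 := rfl

theorem eq_smul_add_crossWith_smul {u : ℝ × ℝ} (hu : u ≠ 0) (z : ℝ × ℝ) :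
    z = ((u.1 * z.1 + u.2 * z.2) / (u.1 ^ 2 + u.2 ^ 2)) • u +
      crossWith u z • (u.1 ^ 2 + u.2 ^ 2)⁻¹ • (u.2, -u.1) := by
  have hN : u.1 ^ 2 + u.2 ^ 2 ≠ 0 := by
    contrapose! hu
    ext <;> simp <;> nlinarith [sq_nonneg u.1, sq_nonneg u.2]
  ext <;> simp only [crossWith_apply, Prod.smul_fst, Prod.smul_snd, smul_eq_mul, Prod.fst_add,
    Prod.snd_add] <;> field_simp <;> ring

end Plane

theorem AddSubgroup.eq_top_of_forall_smul_mem {x₁ x₂ : ℝ} (hx : LinearIndependent ℚ ![1, x₁, x₂])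
    (H : AddSubgroup (ℝ × ℝ)) (hH : IsClosed (H : Set (ℝ × ℝ)))
    (h₁ : ((1 : ℝ), (0 : ℝ)) ∈ H) (h₂ : ((0 : ℝ), (1 : ℝ)) ∈ H) (hx₁₂ : (x₁, x₂) ∈ H)
    {u : ℝ × ℝ} (hu : u ≠ 0) (huH : ∀ t : ℝ, t • u ∈ H) : H = ⊤ := by
  rcases (H.map (crossWith u)).dense_or_cyclic with hdense | ⟨c, hc⟩
  · refine eq_top_iff.2 fun p _ ↦ ?_
    set w : ℝ × ℝ := (u.1 ^ 2 + u.2 ^ 2)⁻¹ • (u.2, -u.1)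
    let F : ℝ → ℝ × ℝ := fun r ↦ p - (crossWith u p - r) • w
    -- `F r ∈ H` for `r` in the dense set `crossWith u '' H`, and `F (crossWith u p) = p`.
    have hFH : F '' (H.map (crossWith u)) ⊆ H := by
      rintro _ ⟨_, ⟨h, hh, rfl⟩, rfl⟩
      have hdecomp := sub_eq_of_eq_add (eq_smul_add_crossWith_smul hu (p - h))
      have hFh : F (crossWith u h) = h + (p - h - crossWith u (p - h) • w) := by
        simp only [F, map_sub]; abel
      rw [hFh, hdecomp]
      exact H.add_mem hh (huH _)
    have hF : ContinuousAt F (crossWith u p) := by fun_prop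
    have hFp : F (crossWith u p) = p := by simp [F]
    have := mem_closure_image hF (hdense (crossWith u p))
    rw [hFp] at this
    simpa [hH.closure_eq] using _root_.closure_mono hFH this
  · have hmem : ∀ z ∈ H, ∃ n : ℤ, n • c = crossWith u z := fun z hz ↦
      AddSubgroup.mem_closure_singleton.1 (hc ▸ AddSubgroup.mem_map_of_mem _ hz)
    obtain ⟨B, hB⟩ := hmem _ h₁
    obtain ⟨A, hA⟩ := hmem _ h₂
    obtain ⟨C, hC⟩ := hmem _ hx₁₂
    simp only [crossWith_apply, zsmul_eq_mul] at hA hB hC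
    have hc0 : c ≠ 0 := by
      rintro rfl
      exact hu (Prod.ext (by simp; linarith) (by simp; linarith))
    have hrel : ((-C : ℤ) : ℝ) + B * x₁ + A * x₂ = 0 := by
      apply mul_left_cancel₀ hc0
      push_cast
      linear_combination (-1 : ℝ) * hC + x₁ * hB + x₂ * hA
    obtain ⟨-, rfl, rfl⟩ := hx.eq_zero_of_intCast_add_mul_add_mul hrel
    simp only [Int.cast_zero, zero_mul] at hA hB
    exact (hu (Prod.ext (by simp; linarith) (by simp; linarith))).elim

def kroneckerSubgroup (x₁ x₂ : ℝ) : AddSubgroup (ℝ × ℝ) :=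
  AddSubgroup.closure {(x₁, x₂), (1, 0), (0, 1)}

theorem topologicalClosure_kroneckerSubgroup_eq_top {x₁ x₂ : ℝ}
    (hx : LinearIndependent ℚ ![1, x₁, x₂]) : (kroneckerSubgroup x₁ x₂).topologicalClosure = ⊤ := by
  set Λ := kroneckerSubgroup x₁ x₂
  have hΛ : {(x₁, x₂), (1, 0), (0, 1)} ⊆ (Λ.topologicalClosure : Set (ℝ × ℝ)) :=
    AddSubgroup.subset_closure.trans Λ.le_topologicalClosure
  simp only [insert_subset_iff, singleton_subset_iff, SetLike.mem_coe] at hΛ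
  obtain ⟨hx₁₂, h₁, h₂⟩ := hΛ
  let p : ℕ → ℝ × ℝ := fun n ↦ (Int.fract (n * x₁), Int.fract (n * x₂))
  have hpH : ∀ n, p n ∈ Λ.topologicalClosure := fun n ↦ by
    have : p n = n • (x₁, x₂) - ⌊n * x₁⌋ • ((1 : ℝ), (0 : ℝ)) - ⌊n * x₂⌋ • ((0 : ℝ), (1 : ℝ)) := by
      ext <;> simp [p, ← Int.self_sub_floor]
    rw [this]
    exact sub_mem (sub_mem (nsmul_mem hx₁₂ n) (zsmul_mem h₁ _)) (zsmul_mem h₂ _)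
  have hp : Function.Injective p := by
    intro a b hab
    obtain ⟨z, hz⟩ := Int.fract_eq_fract.1 (congrArg Prod.fst hab)
    have hrel : ((-z : ℤ) : ℝ) + ((a - b : ℤ) : ℝ) * x₁ + ((0 : ℤ) : ℝ) * x₂ = 0 := by
      push_cast; linear_combination hz
    have := (hx.eq_zero_of_intCast_add_mul_add_mul hrel).2.1
    omega
  have hpK : ∀ n, p n ∈ Icc (0 : ℝ) 1 ×ˢ Icc (0 : ℝ) 1 := fun n ↦
    ⟨⟨Int.fract_nonneg _, (Int.fract_lt_one _).le⟩, ⟨Int.fract_nonneg _, (Int.fract_lt_one _).le⟩⟩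
  obtain ⟨u, hu, huH⟩ := Λ.topologicalClosure.exists_ne_zero_forall_smul_mem
    Λ.isClosed_topologicalClosure fun ε hε ↦
      Λ.topologicalClosure.exists_ne_zero_norm_lt_of_injective (isCompact_Icc.prod isCompact_Icc)
        hp hpK hpH hε
  exact Λ.topologicalClosure.eq_top_of_forall_smul_mem hx Λ.isClosed_topologicalClosure
    h₁ h₂ hx₁₂ hu huH

theorem exists_tendsto_mul_of_linearIndependent {x₁ x₂ : ℝ}
    (hx : LinearIndependent ℚ ![1, x₁, x₂]) (y : 𝕋 × 𝕋) :
    ∃ n : ℕ → ℕ, Tendsto n atTop atTop ∧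
      Tendsto (fun i ↦ (((n i * x₁ : ℝ) : 𝕋), ((n i * x₂ : ℝ) : 𝕋))) atTop (𝓝 y) := by
  let π : ℝ × ℝ →+ 𝕋 × 𝕋 := (QuotientAddGroup.mk' _).prodMap (QuotientAddGroup.mk' _)
  have hπ : Continuous π := (AddCircle.continuous_mk' 1).prodMap (AddCircle.continuous_mk' 1)
  have hπ_dense : DenseRange π :=
    (QuotientAddGroup.mk'_surjective _).prodMap (QuotientAddGroup.mk'_surjective _) |>.denseRange
  have hmap := hπ_dense.topologicalClosure_map_addSubgroup hπ
    (topologicalClosure_kroneckerSubgroup_eq_top hx)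
  have hle : (kroneckerSubgroup x₁ x₂).map π ≤ AddSubgroup.zmultiples ((x₁ : 𝕋), (x₂ : 𝕋)) := by
    rw [kroneckerSubgroup, AddSubgroup.map_le_iff_le_comap, AddSubgroup.closure_le]
    simp [insert_subset_iff, π, AddSubgroup.mem_zmultiples, AddCircle.coe_period,
      ← Prod.zero_eq_mk]
  have hy : MapClusterPt y atTop (· • ((x₁ : 𝕋), (x₂ : 𝕋)) : ℕ → 𝕋 × 𝕋) := by
    have htop := eq_top_iff.2 (hmap ▸ AddSubgroup.topologicalClosure_mono hle)
    rw [mapClusterPt_atTop_nsmul_iff_mem_topologicalClosure_zmultiples, htop]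
    trivial
  obtain ⟨ψ, hψ, hlim⟩ := hy.tendsto_subseq
  refine ⟨ψ, hψ.tendsto_atTop, ?_⟩
  refine hlim.congr fun i ↦ ?_
  rw [Function.comp_apply, Prod.smul_mk, ← AddCircle.coe_nsmul, ← AddCircle.coe_nsmul,
    nsmul_eq_mul, nsmul_eq_mul]

section Sset

variable {θ α₁ α₂ : ℝ} {p₁ p₂ : ℤ} {q₁ q₂ : ℕ}

theorem intCast_eq_of_eq_div_mul_add_div (hθ : θ = (p₁ : ℝ) / q₁ * α₁ + (p₂ : ℝ) / q₂)
    (hq₁ : (q₁ : ℝ) ≠ 0) (hq₂ : (q₂ : ℝ) ≠ 0) (n : ℕ) (ℓ : ℤ) :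
    ((q₁ * p₂ * n + p₁ * ℓ : ℤ) : ℝ) = (q₁ * q₂ * n : ℕ) * θ - p₁ * (n * (q₂ * α₁) - ℓ) := by
  subst hθ
  push_cast
  field_simp
  ring

theorem mem_Sset_of_eq_div_mul_add_div (hθ : θ = (p₁ : ℝ) / q₁ * α₁ + (p₂ : ℝ) / q₂)
    (hq₁ : (q₁ : ℝ) ≠ 0) (hq₂ : (q₂ : ℝ) ≠ 0) (n : ℕ) (ℓ : ℤ) (hm : 0 ≤ q₁ * p₂ * n + p₁ * ℓ) :
    (-p₁ * (n * (q₂ * α₁) - ℓ), ((q₁ * (n * (q₂ * α₁) - ℓ) : ℝ) : 𝕋),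
      ((n * (q₁ * q₂ * (θ * α₂)) : ℝ) : 𝕋) - ((p₁ * α₂ * (n * (q₂ * α₁) - ℓ) : ℝ) : 𝕋)) ∈
        Sset θ α₁ α₂ := by
  have hm_eq := intCast_eq_of_eq_div_mul_add_div hθ hq₁ hq₂ n ℓ
  lift q₁ * p₂ * n + p₁ * ℓ to ℕ using hm with m
  push_cast at hm_eq
  refine ⟨q₁ * q₂ * n, m, Prod.ext ?_ (Prod.ext ?_ ?_)⟩
  · push_cast; linear_combination -hm_eq
  · rw [← AddCircle.coe_add_intCast _ (q₁ * ℓ)]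
    push_cast
    ring_nf
  · rw [hm_eq, ← AddCircle.coe_sub]
    push_cast
    ring_nf

end Sset

theorem stmt15_general (θ α₁ α₂ : ℝ) (hθ : 0 < θ)
    (p₁ p₂ : ℤ) (q₁ q₂ : ℕ) (hq₁ : 0 < q₁) (hq₂ : 0 < q₂)
    (hθeq : θ = (p₁ : ℝ) / (q₁ : ℝ) * α₁ + (p₂ : ℝ) / (q₂ : ℝ))
    (hli : LinearIndependent ℚ ![(1 : ℝ), α₁, θ * α₂]) :
    ∀ (s : ℝ) (w : AddCircle (1 : ℝ)),
      (-((p₁ : ℝ) / (q₁ : ℝ)) * s, ((s : ℝ) : AddCircle (1 : ℝ)), w) ∈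
        closure (Sset θ α₁ α₂) := by
  intro s w
  have hq₁' : (q₁ : ℝ) ≠ 0 := by positivity
  have hq₂' : (q₂ : ℝ) ≠ 0 := by positivity
  obtain ⟨n, hn, hlim⟩ := exists_tendsto_mul_of_linearIndependent
    (hli.one_mul_mul (a := q₂) (b := q₁ * q₂) (by positivity) (by positivity))
    (((s / q₁ : ℝ) : 𝕋), w + ((p₁ * α₂ * (s / q₁) : ℝ) : 𝕋))
  rw [nhds_prod_eq, tendsto_prod_iff'] at hlim
  push_cast at hlim
  obtain ⟨ℓ, hℓ⟩ := AddCircle.exists_tendsto_sub_intCast hlim.1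
  let G : ℝ × 𝕋 → ℝ × 𝕋 × 𝕋 := fun v ↦
    (-p₁ * v.1, ((q₁ * v.1 : ℝ) : 𝕋), v.2 - ((p₁ * α₂ * v.1 : ℝ) : 𝕋))
  have hG : Continuous G := by fun_prop
  have hP : G (s / q₁, w + ((p₁ * α₂ * (s / q₁) : ℝ) : 𝕋)) = (-(p₁ / q₁) * s, (s : 𝕋), w) := by
    simp only [G, mul_div_cancel₀ s hq₁', add_sub_cancel_right]
    ring_nf
  have hm : Tendsto (fun i ↦ ((q₁ * p₂ * n i + p₁ * ℓ i : ℤ) : ℝ)) atTop atTop := by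
    simp only [intCast_eq_of_eq_div_mul_add_div hθeq hq₁' hq₂', sub_eq_add_neg]
    refine Tendsto.atTop_add (Tendsto.atTop_mul_const hθ ?_) ((hℓ.const_mul _).neg)
    exact tendsto_natCast_atTop_atTop.comp
      (Tendsto.one_le_mul_atTop (fun _ ↦ Nat.mul_pos hq₁ hq₂) hn)
  rw [← hP]
  refine mem_closure_of_tendsto ((hG.tendsto _).comp (hℓ.prodMk_nhds hlim.2)) ?_
  filter_upwards [hm.eventually_ge_atTop 0] with i hi
  exact mem_Sset_of_eq_div_mul_add_div hθeq hq₁' hq₂' (n i) (ℓ i) (by exact_mod_cast hi)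

/-- Suppose `α₁` is irrational, `θ = (p₁/q₁)·α₁ + p₂/q₂`, and `1, α₁, θ·α₂` are linearly
independent over `ℚ`. Then for every `s ∈ ℝ` and every `w ∈ ℝ/ℤ`, the point
`(−(p₁/q₁)·s, s mod 1, w)` lies in the closure of `S`. -/
theorem stmt15 (θ α₁ α₂ : ℝ) (hθ : 0 < θ)
    (hα₁ : α₁ ∈ Set.Ioo (0 : ℝ) (1 / 2)) (hα₂ : α₂ ∈ Set.Ioo (0 : ℝ) (1 / 2))
    (hirr : Irrational α₁)
    (p₁ p₂ : ℤ) (q₁ q₂ : ℕ) (hq₁ : 0 < q₁) (hq₂ : 0 < q₂)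
    (hθeq : θ = (p₁ : ℝ) / (q₁ : ℝ) * α₁ + (p₂ : ℝ) / (q₂ : ℝ))
    (hli : LinearIndependent ℚ ![(1 : ℝ), α₁, θ * α₂]) :
    ∀ (s : ℝ) (w : AddCircle (1 : ℝ)),
      (-((p₁ : ℝ) / (q₁ : ℝ)) * s, ((s : ℝ) : AddCircle (1 : ℝ)), w) ∈
        closure (Sset θ α₁ α₂) :=
  stmt15_general θ α₁ α₂ hθ p₁ p₂ q₁ q₂ hq₁ hq₂ hθeq hli
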